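/- For all β, y ∈ ℂ and every m ∈ ℕ, one has R_m(y;0) = R^(1)_m(y) + (β/2−m+1)_{2m}. -/
import Mathlib


open Finset

/-- Ascending Pochhammer symbol `(a)_k = ∏_{i=0}^{k-1} (a+i)`. -/
noncomputable def poch (a : ℂ) (k : ℕ) : ℂ := ∏ i ∈ Finset.range k, (a + i)

/-- `R_k(y;α) = ∏_{l=1}^{k} (y - (α-l)(α-l+1))`. -/
noncomputable def Rpoly (y α : ℂ) (k : ℕ) : ℂ :=
  ∏ l ∈ Finset.range k, (y - (α - (l + 1)) * (α - (l + 1) + 1))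

/-- `R^(1)_k(y) = ∑_{j=1}^{k} (β/2-k+j+1)_{2(k-j)} (y - (β/2)(β/2+1)) R_{j-1}(y;k)`. -/
noncomputable def R1 (β y : ℂ) (k : ℕ) : ℂ :=
  ∑ j ∈ Finset.Icc 1 k,
    poch (β/2 - k + j + 1) (2*(k - j)) * (y - β/2*(β/2+1)) * Rpoly y k (j-1)

/-- `s^(-)_m(y)`. -/
noncomputable def sminus (β lam y : ℂ) (m : ℕ) : ℂ :=
  ∑ k ∈ Finset.range (m+1),
    (m.choose k : ℂ) * poch (β/2 - lam - m) (m-k) * poch (-β/2 - m - 1) (m-k) * Rpoly y 0 k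

/-- `s^(+)_m(y)`. -/
noncomputable def splus (β lam y : ℂ) (m : ℕ) : ℂ :=
  ∑ k ∈ Finset.range (m+1),
    (m.choose k : ℂ) * poch (β/2 - lam - m) (m-k) * poch (-β/2 - m + 1) (m-k) * Rpoly y 0 k

/-- Coefficients `D^(1)_k(m)`. -/
noncomputable def D1 (β lam : ℂ) (m k : ℕ) : ℂ :=
  if k = m then lam - β + 2*m
  else (m.choose k : ℂ) * poch (lam - β/2 + k + 1) (m-k) * poch (β/2 + k + 1) (m-k-1) *
    ((k:ℂ)*(lam+β+2*m) + β/2*(lam-β-2*m))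

/-- `s^(1)_m(y) = ∑_{k=0}^m D^(1)_k(m) R^(1)_k(y)`. -/
noncomputable def s1 (β lam y : ℂ) (m : ℕ) : ℂ :=
  ∑ k ∈ Finset.range (m+1), D1 β lam m k * R1 β y k

lemma poch_succ (a : ℂ) (n : ℕ) : poch a (n+1) = poch a n * (a + n) := by
  simp [poch, Finset.prod_range_succ]

lemma poch_succ' (a : ℂ) (n : ℕ) : poch a (n+1) = a * poch (a+1) n := by
  rw [poch, Finset.prod_range_succ']
  simp only [Nat.cast_zero, add_zero, mul_comm, poch]
  congr 1
  apply Finset.prod_congr rfl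
  intro i _
  push_cast
  ring

lemma Rpoly_succ (y α : ℂ) (k : ℕ) :
    Rpoly y α (k+1) = Rpoly y α k * (y - (α - (k+1)) * (α - (k+1) + 1)) := by
  simp [Rpoly, Finset.prod_range_succ]

/-- `R_m(y;0) = R^(1)_m(y) + (β/2-m+1)_{2m}`. -/
theorem Rpoly_eq_R1_add_poch (β y : ℂ) (m : ℕ) :
    Rpoly y 0 m = R1 β y m + poch (β/2 - (m:ℂ) + 1) (2*m) := by
  -- Step 1: Rpoly y 0 m = ∏ l ∈ range m, (y - l*(l+1)) = Rpoly y m m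
  have h1 : Rpoly y 0 m = ∏ l ∈ Finset.range m, (y - (l:ℂ)*((l:ℂ)+1)) := by
    unfold Rpoly
    apply Finset.prod_congr rfl
    intro l _
    push_cast
    ring
  have h2 : Rpoly y (m:ℂ) m = ∏ l ∈ Finset.range m, (y - (l:ℂ)*((l:ℂ)+1)) := by
    unfold Rpoly
    rw [← Finset.prod_range_reflect]
    apply Finset.prod_congr rfl
    intro l hl
    rw [Finset.mem_range] at hl
    have hc : ((m - 1 - l : ℕ) : ℂ) = (m:ℂ) - 1 - l := by
      have h1l : 1 + l ≤ m := by omega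
      have : m - 1 - l = m - (1 + l) := by omega
      rw [this, Nat.cast_sub h1l]
      push_cast; ring
    rw [hc]
    ring
  -- telescoping function
  set F : ℕ → ℂ := fun j => poch (β/2 - m + j + 1) (2*(m-j)) * Rpoly y m j with hF
  have hterm : ∀ i ∈ Finset.range m,
      poch (β/2 - m + ((1+i : ℕ):ℂ) + 1) (2*(m - (1+i))) * (y - β/2*(β/2+1)) * Rpoly y m ((1+i)-1)
        = F (i+1) - F i := by
    intro i hi
    rw [Finset.mem_range] at hi
    have hsub1 : m - (1+i) = m - i - 1 := by omega
    have hsub2 : 2*(m - i) = 2*(m - i - 1) + 1 + 1 := by omega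
    have hcast : ((m - i - 1 : ℕ) : ℂ) = (m:ℂ) - i - 1 := by
      have : m - i - 1 = m - (i + 1) := by omega
      rw [this, Nat.cast_sub (by omega)]
      push_cast; ring
    have hpoch : poch (β/2 - m + i + 1) (2*(m-i))
        = (β/2 - m + i + 1) * poch (β/2 - m + i + 2) (2*(m-i-1)) * (β/2 + m - i) := by
      rw [hsub2, poch_succ', poch_succ]
      have : (β/2 - (m:ℂ) + i + 1) + 1 = β/2 - m + i + 2 := by ring
      rw [this]
      have h2n : ((2*(m-i-1) : ℕ) : ℂ) = 2*((m:ℂ) - i - 1) := by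
        push_cast [hcast]; ring
      rw [h2n]
      ring
    have hR : Rpoly y m (i+1) = Rpoly y m i * (y - ((m:ℂ) - (i+1)) * ((m:ℂ) - (i+1) + 1)) :=
      Rpoly_succ y m i
    simp only [hF]
    rw [hR, hpoch]
    have e1 : (1:ℕ) + i - 1 = i := by omega
    have e2 : m - (1 + i) = m - i - 1 := by omega
    have hsub3 : m - (i+1) = m - i - 1 := by omega
    rw [e1, e2, hsub3]
    have e4 : (β/2 - (m:ℂ) + (((i:ℕ)+1 : ℕ) : ℂ) + 1) = β/2 - m + i + 2 := by push_cast; ring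
    have e5 : (β/2 - (m:ℂ) + (((1 + i : ℕ)):ℂ) + 1) = β/2 - m + i + 2 := by push_cast; ring
    rw [e4, e5]
    ring
  have hsum : R1 β y m = F m - F 0 := by
    unfold R1
    rw [← Finset.Ico_add_one_right_eq_Icc, Finset.sum_Ico_eq_sum_range]
    have hm : m + 1 - 1 = m := by omega
    rw [hm]
    rw [Finset.sum_congr rfl hterm]
    exact Finset.sum_range_sub F m
  have hFm : F m = Rpoly y m m := by
    simp [hF, poch, Nat.sub_self]
  have hF0 : F 0 = poch (β/2 - (m:ℂ) + 1) (2*m) := by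
    simp [hF, Rpoly]
  rw [hsum, hFm, hF0, h1, ← h2]
  ring
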